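/- arXiv:1804.04217 — 6 statements merged into one kernel-verified Lean document; each statement's English description precedes it below -/
import Mathlib

section
/- Let n ≥ 1, let ω : Fin n → Fin n → ℝ and c ∈ ℝ^n satisfy the leaderless condition Σ_j (ω i j * c i − ω j i * c j) = 0 for every i. Then for every vector y ∈ ℝ^n, the double sum Σ_i Σ_j c i * ω i j * (y j − y i) equals 0. (This is the key cancellation that makes the social coupling term vanish from the aggregate consumption dynamics.) -/
/-- In a leaderless network the social coupling term vanishes from the
aggregate consumption dynamics. -/
theorem leaderless_social_term_vanishes (n : ℕ) (hn : 1 ≤ n)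
    (ω : Fin n → Fin n → ℝ) (c : Fin n → ℝ)
    (hleaderless : ∀ i, ∑ j, (ω i j * c i - ω j i * c j) = 0) :
    ∀ y : Fin n → ℝ, ∑ i, ∑ j, c i * ω i j * (y j - y i) = 0 := by
  intro y
  have h1 : ∑ i, ∑ j, c i * ω i j * (y j - y i)
      = (∑ i, ∑ j, c i * ω i j * y j) - ∑ i, ∑ j, c i * ω i j * y i := by
    simp [mul_sub, Finset.sum_sub_distrib]
  have h2 : (∑ i, ∑ j, c i * ω i j * y j) = ∑ i, ∑ j, c j * ω j i * y i :=
    Finset.sum_comm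
  have h3 : (∑ i, ∑ j, c j * ω j i * y i) - (∑ i, ∑ j, c i * ω i j * y i)
      = -∑ i, y i * ∑ j, (ω i j * c i - ω j i * c j) := by
    rw [← Finset.sum_sub_distrib, ← Finset.sum_neg_distrib]
    apply Finset.sum_congr rfl
    intro i _
    rw [← Finset.sum_sub_distrib, Finset.mul_sum, ← Finset.sum_neg_distrib]
    apply Finset.sum_congr rfl
    intro j _
    ring
  rw [h1, h2, h3]
  simp [hleaderless]
end

section
/- Let K₁ > 0 and K₂ be real constants with |K₂| < K₁, let z₀ = log(K₂/K₁ + 1), and let v, w : ℝ → ℝ be differentiable functions satisfying v̇(t) = −e^{z₀}(e^{v(t)} − 1) − w(t) and ẇ(t) = (K₁ + K₂)(e^{v(t)} − 1) for all t. Then the function t ↦ V(v(t), w(t)), where V(v, w) = e^v − v − 1 + w²/(2(K₁ + K₂)), is differentiable with derivative equal to −e^{z₀}(e^{v(t)} − 1)² ≤ 0 for all t. -/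
/-!
Along a trajectory, `d/dt (e^v - v - 1) = (e^v - 1) v̇` and `d/dt (w² / (2c)) = w ẇ / c`.
Substituting the dynamics, the cross terms `∓ w (e^v - 1)` cancel, leaving `-e^{z₀} (e^v - 1)²`;
the scaling `1 / (2c)` with `c = K₁ + K₂ ≠ 0` is chosen exactly for this cancellation.
-/

open Real

lemma HasDerivAt.exp_sub_self_sub_one {v : ℝ → ℝ} {v' t : ℝ} (hv : HasDerivAt v v' t) :
    HasDerivAt (fun s => Real.exp (v s) - v s - 1) ((Real.exp (v t) - 1) * v') t :=
  ((hv.exp.sub hv).sub_const 1).congr_deriv (by ring)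

lemma HasDerivAt.sq_div_two_mul {w : ℝ → ℝ} {c g t : ℝ} (hc : c ≠ 0)
    (hw : HasDerivAt w (c * g) t) :
    HasDerivAt (fun s => w s ^ 2 / (2 * c)) (w t * g) t :=
  ((hw.pow 2).div_const (2 * c)).congr_deriv (by field_simp; ring)

theorem hasDerivAt_lyapunov_of_consumption_dynamics {a c : ℝ} (hc : c ≠ 0) {v w : ℝ → ℝ}
    {t : ℝ} (hv : HasDerivAt v (-a * (exp (v t) - 1) - w t) t)
    (hw : HasDerivAt w (c * (exp (v t) - 1)) t) :
    HasDerivAt (fun s => exp (v s) - v s - 1 + w s ^ 2 / (2 * c))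
      (-a * (exp (v t) - 1) ^ 2) t :=
  (hv.exp_sub_self_sub_one.add (hw.sq_div_two_mul hc)).congr_deriv (by ring)

theorem lyapunov_derivative_nonpos_general (K₁ K₂ : ℝ) (hK₂ : |K₂| < K₁)
    (z₀ : ℝ)
    (v w : ℝ → ℝ)
    (hv : ∀ t, HasDerivAt v (-Real.exp z₀ * (Real.exp (v t) - 1) - w t) t)
    (hw : ∀ t, HasDerivAt w ((K₁ + K₂) * (Real.exp (v t) - 1)) t) :
    ∀ t, HasDerivAt
        (fun s => Real.exp (v s) - v s - 1 + (w s) ^ 2 / (2 * (K₁ + K₂)))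
        (-Real.exp z₀ * (Real.exp (v t) - 1) ^ 2) t ∧
      -Real.exp z₀ * (Real.exp (v t) - 1) ^ 2 ≤ 0 := by
  have hK : K₁ + K₂ ≠ 0 := by linarith [neg_lt_of_abs_lt hK₂]
  intro t
  exact ⟨hasDerivAt_lyapunov_of_consumption_dynamics hK (hv t) (hw t),
    mul_nonpos_of_nonpos_of_nonneg (neg_nonpos.mpr (exp_pos z₀).le) (sq_nonneg _)⟩

/-- Along solutions of the shifted network-level dynamics, the Lyapunov
function `V(v,w) = e^v - v - 1 + w²/(2(K₁+K₂))` has derivative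
`-e^{z₀}(e^{v(t)} - 1)² ≤ 0`. -/
theorem lyapunov_derivative_nonpos (K₁ K₂ : ℝ) (hK₁ : 0 < K₁) (hK₂ : |K₂| < K₁)
    (z₀ : ℝ) (hz₀ : z₀ = Real.log (K₂ / K₁ + 1))
    (v w : ℝ → ℝ)
    (hv : ∀ t, HasDerivAt v (-Real.exp z₀ * (Real.exp (v t) - 1) - w t) t)
    (hw : ∀ t, HasDerivAt w ((K₁ + K₂) * (Real.exp (v t) - 1)) t) :
    ∀ t, HasDerivAt
        (fun s => Real.exp (v s) - v s - 1 + (w s) ^ 2 / (2 * (K₁ + K₂)))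
        (-Real.exp z₀ * (Real.exp (v t) - 1) ^ 2) t ∧
      -Real.exp z₀ * (Real.exp (v t) - 1) ^ 2 ≤ 0 :=
  lyapunov_derivative_nonpos_general K₁ K₂ hK₂ z₀ v w hv hw
end

section
/- Let K₁ > 0 and K₂ be real constants with |K₂| < K₁, let z₀ = log(K₂/K₁ + 1), and let v, w : ℝ → ℝ be differentiable functions satisfying v̇(t) = −e^{z₀}(e^{v(t)} − 1) − w(t) and ẇ(t) = (K₁ + K₂)(e^{v(t)} − 1) for all t ≥ 0. Then the trajectory t ↦ (v(t), w(t)), t ≥ 0, is bounded in ℝ². -/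
lemma abs_le_exp_sub (x : ℝ) : |x| ≤ Real.exp x - x - 1 + 2 := by
  rcases le_or_gt x 0 with h | h
  · rw [abs_of_nonpos h]
    nlinarith [Real.exp_pos x]
  · rw [abs_of_pos h]
    have h1 : x / 2 + 1 ≤ Real.exp (x / 2) := by
      have := Real.add_one_le_exp (x / 2); linarith
    have h2 : Real.exp (x / 2) * Real.exp (x / 2) = Real.exp x := by
      rw [← Real.exp_add]; ring_nf
    nlinarith [sq_nonneg (x / 2 - 1), Real.exp_pos (x / 2), h1, h2]

/-- Every solution of the shifted network-level dynamics is bounded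
on `[0, ∞)`. -/
theorem trajectory_bounded (K₁ K₂ : ℝ) (hK₁ : 0 < K₁) (hK₂ : |K₂| < K₁)
    (z₀ : ℝ) (hz₀ : z₀ = Real.log (K₂ / K₁ + 1))
    (v w : ℝ → ℝ)
    (hv : ∀ t ≥ (0 : ℝ), HasDerivAt v (-Real.exp z₀ * (Real.exp (v t) - 1) - w t) t)
    (hw : ∀ t ≥ (0 : ℝ), HasDerivAt w ((K₁ + K₂) * (Real.exp (v t) - 1)) t) :
    ∃ M : ℝ, ∀ t ≥ (0 : ℝ), ‖(v t, w t)‖ ≤ M := by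
  have hk : 0 < K₁ + K₂ := by
    have := abs_lt.mp hK₂; linarith [this.1]
  set k : ℝ := K₁ + K₂ with hkdef
  set V : ℝ → ℝ := fun t => Real.exp (v t) - v t - 1 + (w t) ^ 2 / (2 * k) with hVdef
  have hVderiv : ∀ t ≥ (0 : ℝ),
      HasDerivAt V (-Real.exp z₀ * (Real.exp (v t) - 1) ^ 2) t := by
    intro t ht
    have h1 := hv t ht
    have h2 := hw t ht
    have hd : HasDerivAt V
        ((Real.exp (v t) * (-Real.exp z₀ * (Real.exp (v t) - 1) - w t)
          - (-Real.exp z₀ * (Real.exp (v t) - 1) - w t))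
          + (2 * w t ^ 1 * (k * (Real.exp (v t) - 1))) / (2 * k)) t := by
      exact (((h1.exp).sub h1).sub_const 1).add
        (((h2.pow 2)).div_const (2 * k))
    convert hd using 1
    field_simp
    ring
  have hVnonneg : ∀ s : ℝ, 0 ≤ V s := by
    intro s
    have h1 : 0 ≤ Real.exp (v s) - v s - 1 := by
      have := Real.add_one_le_exp (v s); linarith
    have h2 : 0 ≤ (w s) ^ 2 / (2 * k) := by positivity
    simp only [hVdef]; linarith
  -- V is antitone on [0, ∞)
  have hanti : AntitoneOn V (Set.Ici (0 : ℝ)) := by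
    apply antitoneOn_of_deriv_nonpos (convex_Ici 0)
    · intro t ht
      exact (hVderiv t ht).continuousAt.continuousWithinAt
    · rw [interior_Ici]
      intro t ht
      exact (hVderiv t (le_of_lt ht)).differentiableAt.differentiableWithinAt
    · rw [interior_Ici]
      intro t ht
      rw [(hVderiv t (le_of_lt ht)).deriv]
      have : (0:ℝ) < Real.exp z₀ := Real.exp_pos _
      nlinarith [sq_nonneg (Real.exp (v t) - 1)]
  have hVle : ∀ t ≥ (0 : ℝ), V t ≤ V 0 := fun t ht =>
    hanti Set.self_mem_Ici ht ht
  set C : ℝ := V 0 with hC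
  have hCnn : 0 ≤ C := hVnonneg 0
  clear_value C
  refine ⟨max (C + 2) (Real.sqrt (2 * k * C)), fun t ht => ?_⟩
  have hVt := hVle t ht
  have hev : 0 ≤ Real.exp (v t) - v t - 1 := by
    have := Real.add_one_le_exp (v t); linarith
  have hwsq : 0 ≤ (w t) ^ 2 / (2 * k) := by positivity
  have hvb : |v t| ≤ C + 2 := by
    have h1 : Real.exp (v t) - v t - 1 ≤ C := by
      simp only [hVdef] at hVt
      have h0 : (0:ℝ) ≤ w t ^ 2 / (2 * k) := div_nonneg (sq_nonneg _) (by linarith)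
      linarith
    linarith [abs_le_exp_sub (v t)]
  have hwb : |w t| ≤ Real.sqrt (2 * k * C) := by
    have h1 : (w t) ^ 2 / (2 * k) ≤ C := by
      simp only [hVdef] at hVt
      linarith
    have h2 : (w t) ^ 2 ≤ 2 * k * C := by
      rw [div_le_iff₀ (by positivity)] at h1; linarith
    calc |w t| = Real.sqrt ((w t) ^ 2) := by rw [Real.sqrt_sq_eq_abs]
    _ ≤ Real.sqrt (2 * k * C) := Real.sqrt_le_sqrt h2
  rw [Prod.norm_def]
  simp only [Real.norm_eq_abs]
  exact max_le_max hvb hwb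
end

section
/- Let K₁ > 0 and K₂ be real constants with |K₂| < K₁, and let z₀ = log(K₂/K₁ + 1). Then the origin is globally attractive for the planar system v̇ = −e^{z₀}(e^v − 1) − w, ẇ = (K₁ + K₂)(e^v − 1): for every pair of differentiable functions v, w : ℝ → ℝ satisfying these equations for all t ≥ 0, one has (v(t), w(t)) → (0, 0) as t → ∞. -/
/-!
Write `c = e^{z₀} > 0` and `K = K₁ + K₂ > 0`. Then `V = K (e^v - v - 1) + w² / 2` is a Lyapunov
function: along solutions `V̇ = -c K (e^v - 1)² ≤ 0`. Hence `V` converges, and the trajectory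
stays in the compact sublevel set `{V ≤ V(0)}`, so every continuous function of the state, in
particular the second derivatives of `V` and `v`, stays bounded. Barbalat's lemma applied to `V`
gives `V̇ → 0`, i.e. `e^v → 1` and `v → 0`; applied to `v` it gives `v̇ → 0`, hence
`w = -v̇ - c (e^v - 1) → 0`.
-/

open Filter

open Set Topology Real

theorem AntitoneOn.exists_tendsto_atTop {α β : Type*} [LinearOrder α]
    [ConditionallyCompleteLinearOrder β] [TopologicalSpace β] [OrderTopology β]
    {f : α → β} {a : α} (hf : AntitoneOn f (Ici a)) (hbdd : BddBelow (f '' Ici a)) :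
    ∃ L, Tendsto f atTop (𝓝 L) := by
  set g : α → β := fun x => f (max x a)
  have hg : Antitone g := fun x y hxy =>
    hf (le_max_right x a) (le_max_right y a) (max_le_max_right a hxy)
  have hg_bdd : BddBelow (range g) :=
    hbdd.mono (range_subset_iff.2 fun x => mem_image_of_mem f (le_max_right x a))
  refine ⟨_, (tendsto_atTop_ciInf hg hg_bdd).congr' ?_⟩
  filter_upwards [eventually_ge_atTop a] with x hx
  simp [g, max_eq_left hx]

theorem abs_sub_sub_mul_deriv_le {f f' f'' : ℝ → ℝ} {a b M : ℝ} (hab : a ≤ b)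
    (hf : ∀ x ∈ Icc a b, HasDerivAt f (f' x) x) (hf' : ∀ x ∈ Icc a b, HasDerivAt f' (f'' x) x)
    (hM : ∀ x ∈ Icc a b, |f'' x| ≤ M) :
    |f b - f a - (b - a) * f' a| ≤ M * (b - a) ^ 2 := by
  have ha : a ∈ Icc a b := left_mem_Icc.2 hab
  have hb : b ∈ Icc a b := right_mem_Icc.2 hab
  have hM₀ : 0 ≤ M := (abs_nonneg _).trans (hM a ha)
  have hf'_lip : ∀ x ∈ Icc a b, ‖f' x - f' a‖ ≤ M * (b - a) := fun x hx =>
    calc ‖f' x - f' a‖ ≤ M * ‖x - a‖ :=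
          Convex.norm_image_sub_le_of_norm_hasDerivWithin_le
            (fun y hy => (hf' y hy).hasDerivWithinAt) hM (convex_Icc a b) ha hx
      _ ≤ M * (b - a) := by
          rw [Real.norm_of_nonneg (sub_nonneg.2 hx.1)]
          exact mul_le_mul_of_nonneg_left (by linarith [hx.2]) hM₀
  have key := Convex.norm_image_sub_le_of_norm_hasDerivWithin_le (f := fun x => f x - x * f' a)
    (fun x hx => ((hf x hx).sub (hasDerivAt_mul_const (f' a))).hasDerivWithinAt)
    hf'_lip (convex_Icc a b) ha hb
  rw [Real.norm_eq_abs, Real.norm_of_nonneg (sub_nonneg.2 hab)] at key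
  calc |f b - f a - (b - a) * f' a| = |f b - b * f' a - (f a - a * f' a)| := by congr 1; ring
    _ ≤ M * (b - a) * (b - a) := key
    _ = M * (b - a) ^ 2 := by ring

/-- Barbalat's lemma, in the form with a bounded second derivative. -/
theorem tendsto_deriv_atTop_zero {f f' f'' : ℝ → ℝ} {L : ℝ}
    (hf : ∀ᶠ t in atTop, HasDerivAt f (f' t) t) (hf' : ∀ᶠ t in atTop, HasDerivAt f' (f'' t) t)
    (hf'' : IsBoundedUnder (· ≤ ·) atTop fun t => |f'' t|) (hL : Tendsto f atTop (𝓝 L)) :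
    Tendsto f' atTop (𝓝 0) := by
  obtain ⟨M, hM⟩ := hf''
  obtain ⟨T, hT⟩ := eventually_atTop.1 (hf.and (hf'.and (eventually_map.1 hM)))
  rw [Metric.tendsto_nhds]
  intro ε hε
  obtain ⟨δ, hδ, hMδ⟩ := exists_pos_mul_lt (half_pos hε) M
  have hincr : Tendsto (fun t => f (t + δ) - f t) atTop (𝓝 0) := by
    simpa using (hL.comp (tendsto_atTop_add_const_right _ δ tendsto_id)).sub hL
  filter_upwards [hincr.eventually (Metric.ball_mem_nhds 0 (by positivity : 0 < δ * (ε / 2))),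
    eventually_ge_atTop T] with t hsmall htT
  have hTaylor : |f (t + δ) - f t - (t + δ - t) * f' t| ≤ M * (t + δ - t) ^ 2 :=
    abs_sub_sub_mul_deriv_le (by linarith) (fun x hx => (hT x (htT.trans hx.1)).1)
      (fun x hx => (hT x (htT.trans hx.1)).2.1) (fun x hx => (hT x (htT.trans hx.1)).2.2)
  rw [Real.dist_eq, sub_zero] at hsmall
  rw [Real.dist_eq, sub_zero]
  have hδf' : δ * |f' t| < δ * ε := by
    calc δ * |f' t| = |δ * f' t| := by rw [abs_mul, abs_of_pos hδ]
      _ ≤ |f (t + δ) - f t| + |f (t + δ) - f t - δ * f' t| := by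
          simpa using abs_sub (f (t + δ) - f t) (f (t + δ) - f t - δ * f' t)
      _ < δ * (ε / 2) + M * δ * δ := by
          simp only [add_sub_cancel_left] at hTaylor
          linarith
      _ ≤ δ * ε := by nlinarith
  exact lt_of_mul_lt_mul_left hδf' hδ.le

noncomputable def lyapunov (K x y : ℝ) : ℝ := K * (exp x - x - 1) + y ^ 2 / 2

theorem lyapunov_nonneg {K : ℝ} (hK : 0 ≤ K) (x y : ℝ) : 0 ≤ lyapunov K x y := by
  have : 0 ≤ exp x - x - 1 := by linarith [add_one_le_exp x]
  unfold lyapunov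
  positivity

theorem abs_le_of_lyapunov_le {K x y B : ℝ} (hK : 0 < K) (h : lyapunov K x y ≤ B) :
    |x| ≤ B / K + 1 ∧ |y| ≤ B + 1 := by
  have hexp : 0 ≤ exp x - x - 1 := by linarith [add_one_le_exp x]
  unfold lyapunov at h
  have hx : exp x - x - 1 ≤ B / K := by
    rw [le_div_iff₀' hK]
    nlinarith [sq_nonneg y]
  have hy : y ^ 2 ≤ (B + 1) ^ 2 := by nlinarith [mul_nonneg hK.le hexp]
  refine ⟨abs_le.2 ⟨?_, ?_⟩, abs_le_of_sq_le_sq hy ?_⟩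
  · linarith [exp_pos x]
  · linarith [two_mul_le_exp (x := x)]
  · nlinarith [mul_nonneg hK.le hexp, sq_nonneg y]

structure IsForwardSolution (c K : ℝ) (v w : ℝ → ℝ) : Prop where
  hasDerivAt_v : ∀ t ≥ (0 : ℝ), HasDerivAt v (-c * (exp (v t) - 1) - w t) t
  hasDerivAt_w : ∀ t ≥ (0 : ℝ), HasDerivAt w (K * (exp (v t) - 1)) t

namespace IsForwardSolution

variable {c K : ℝ} {v w : ℝ → ℝ}

theorem hasDerivAt_lyapunov (h : IsForwardSolution c K v w) {t : ℝ} (ht : 0 ≤ t) :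
    HasDerivAt (fun s => lyapunov K (v s) (w s)) (-(c * K) * (exp (v t) - 1) ^ 2) t := by
  have hv := h.hasDerivAt_v t ht
  have hw := h.hasDerivAt_w t ht
  refine ((((hv.exp.sub hv).sub_const 1).const_mul K).add ((hw.pow 2).div_const 2)).congr_deriv ?_
  ring

theorem antitoneOn_lyapunov (h : IsForwardSolution c K v w) (hc : 0 ≤ c) (hK : 0 ≤ K) :
    AntitoneOn (fun s => lyapunov K (v s) (w s)) (Ici 0) := by
  refine antitoneOn_of_hasDerivWithinAt_nonpos (convex_Ici 0)
    (f' := fun t => -(c * K) * (exp (v t) - 1) ^ 2)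
    (fun t ht => (h.hasDerivAt_lyapunov ht).continuousAt.continuousWithinAt)
    (fun t ht => ?_) (fun t _ => ?_)
  · rw [interior_Ici] at ht
    exact (h.hasDerivAt_lyapunov (le_of_lt ht)).hasDerivWithinAt
  · have := mul_nonneg hc hK
    nlinarith [sq_nonneg (exp (v t) - 1)]

theorem exists_tendsto_lyapunov (h : IsForwardSolution c K v w) (hc : 0 ≤ c) (hK : 0 ≤ K) :
    ∃ L, Tendsto (fun s => lyapunov K (v s) (w s)) atTop (𝓝 L) :=
  (h.antitoneOn_lyapunov hc hK).exists_tendsto_atTop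
    ⟨0, forall_mem_image.2 fun _ _ => lyapunov_nonneg hK _ _⟩

theorem exists_isCompact_forall_mem (h : IsForwardSolution c K v w) (hc : 0 ≤ c) (hK : 0 < K) :
    ∃ S : Set (ℝ × ℝ), IsCompact S ∧ ∀ t ≥ 0, (v t, w t) ∈ S := by
  set B := lyapunov K (v 0) (w 0)
  refine ⟨Icc (-(B / K + 1)) (B / K + 1) ×ˢ Icc (-(B + 1)) (B + 1),
    isCompact_Icc.prod isCompact_Icc, fun t ht => ?_⟩
  obtain ⟨hvt, hwt⟩ := abs_le_of_lyapunov_le hK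
    (h.antitoneOn_lyapunov hc hK.le self_mem_Ici ht ht)
  exact ⟨abs_le.1 hvt, abs_le.1 hwt⟩

theorem isBoundedUnder_abs_comp (h : IsForwardSolution c K v w) (hc : 0 ≤ c) (hK : 0 < K)
    {Φ : ℝ × ℝ → ℝ} (hΦ : Continuous Φ) :
    IsBoundedUnder (· ≤ ·) atTop fun t => |Φ (v t, w t)| := by
  obtain ⟨S, hS, hvw⟩ := h.exists_isCompact_forall_mem hc hK
  obtain ⟨M, hM⟩ := hS.exists_bound_of_continuousOn hΦ.continuousOn
  exact isBoundedUnder_of_eventually_le (eventually_atTop.2 ⟨0, fun t ht => hM _ (hvw t ht)⟩)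

theorem tendsto_v (h : IsForwardSolution c K v w) (hc : 0 < c) (hK : 0 < K) :
    Tendsto v atTop (𝓝 0) := by
  obtain ⟨L, hL⟩ := h.exists_tendsto_lyapunov hc.le hK.le
  have hV' : ∀ t ≥ (0 : ℝ), HasDerivAt (fun s => -(c * K) * (exp (v s) - 1) ^ 2)
      (-(c * K) * (2 * (exp (v t) - 1) * (exp (v t) * (-c * (exp (v t) - 1) - w t)))) t :=
    fun t ht => by
      refine ((((h.hasDerivAt_v t ht).exp.sub_const 1).pow 2).const_mul (-(c * K))).congr_deriv ?_
      ring
  have hV'_lim := tendsto_deriv_atTop_zero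
    (eventually_atTop.2 ⟨0, fun t ht => h.hasDerivAt_lyapunov ht⟩) (eventually_atTop.2 ⟨0, hV'⟩)
    (h.isBoundedUnder_abs_comp hc.le hK
      (Φ := fun p => -(c * K) * (2 * (exp p.1 - 1) * (exp p.1 * (-c * (exp p.1 - 1) - p.2))))
      (by fun_prop)) hL
  have hsq : Tendsto (fun t => (exp (v t) - 1) ^ 2) atTop (𝓝 0) := by
    have := hV'_lim.const_mul (-(c * K))⁻¹
    rw [mul_zero] at this
    refine this.congr fun t => ?_
    field_simp
  have hexp : Tendsto (fun t => exp (v t)) atTop (𝓝 1) := by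
    have := hsq.sqrt
    simp only [sqrt_sq_eq_abs, sqrt_zero] at this
    simpa using ((tendsto_zero_iff_abs_tendsto_zero _).2 this).add_const 1
  simpa [Function.comp_def] using (continuousAt_log one_ne_zero).tendsto.comp hexp

theorem tendsto_w (h : IsForwardSolution c K v w) (hc : 0 < c) (hK : 0 < K) :
    Tendsto w atTop (𝓝 0) := by
  have hv'' : ∀ t ≥ (0 : ℝ), HasDerivAt (fun s => -c * (exp (v s) - 1) - w s)
      (-c * (exp (v t) * (-c * (exp (v t) - 1) - w t)) - K * (exp (v t) - 1)) t :=
    fun t ht => (((h.hasDerivAt_v t ht).exp.sub_const 1).const_mul (-c)).sub (h.hasDerivAt_w t ht)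
  have hv'_lim := tendsto_deriv_atTop_zero
    (eventually_atTop.2 ⟨0, h.hasDerivAt_v⟩) (eventually_atTop.2 ⟨0, hv''⟩)
    (h.isBoundedUnder_abs_comp hc.le hK
      (Φ := fun p => -c * (exp p.1 * (-c * (exp p.1 - 1) - p.2)) - K * (exp p.1 - 1))
      (by fun_prop)) (h.tendsto_v hc hK)
  have hexp : Tendsto (fun t => exp (v t)) atTop (𝓝 1) := by
    simpa [Function.comp_def] using (continuous_exp.tendsto 0).comp (h.tendsto_v hc hK)
  have hw_eq : ∀ t, -(-c * (exp (v t) - 1) - w t) - c * (exp (v t) - 1) = w t := fun t => by ring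
  simpa using (hv'_lim.neg.sub ((hexp.sub_const 1).const_mul c)).congr hw_eq

end IsForwardSolution

theorem origin_globally_attractive_general (K₁ K₂ : ℝ) (hK₂ : |K₂| < K₁) (z₀ : ℝ) :
    ∀ v w : ℝ → ℝ,
      (∀ t ≥ (0 : ℝ), HasDerivAt v (-Real.exp z₀ * (Real.exp (v t) - 1) - w t) t) →
      (∀ t ≥ (0 : ℝ), HasDerivAt w ((K₁ + K₂) * (Real.exp (v t) - 1)) t) →
      Tendsto (fun t => (v t, w t)) atTop (nhds ((0 : ℝ), (0 : ℝ))) := by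
  intro v w hv hw
  have hK : 0 < K₁ + K₂ := by linarith [neg_abs_le K₂]
  have h : IsForwardSolution (exp z₀) (K₁ + K₂) v w := ⟨hv, hw⟩
  exact (h.tendsto_v (exp_pos z₀) hK).prodMk_nhds (h.tendsto_w (exp_pos z₀) hK)

/-- The origin is globally attractive for the shifted network-level
dynamics. -/
theorem origin_globally_attractive (K₁ K₂ : ℝ) (hK₁ : 0 < K₁) (hK₂ : |K₂| < K₁)
    (z₀ : ℝ) (hz₀ : z₀ = Real.log (K₂ / K₁ + 1)) :
    ∀ v w : ℝ → ℝ,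
      (∀ t ≥ (0 : ℝ), HasDerivAt v (-Real.exp z₀ * (Real.exp (v t) - 1) - w t) t) →
      (∀ t ≥ (0 : ℝ), HasDerivAt w ((K₁ + K₂) * (Real.exp (v t) - 1)) t) →
      Tendsto (fun t => (v t, w t)) atTop (nhds ((0 : ℝ), (0 : ℝ))) :=
  origin_globally_attractive_general K₁ K₂ hK₂ z₀
end

section
/- Let K₁ > 0 and K₂ be real constants with |K₂| < K₁, and let z₀ = log(K₂/K₁ + 1). Then the origin is Lyapunov stable for the planar system v̇ = −e^{z₀}(e^v − 1) − w, ẇ = (K₁ + K₂)(e^v − 1): for every ε > 0 there exists δ > 0 such that every differentiable solution (v, w) of the system on [0, ∞) with ‖(v(0), w(0))‖ < δ satisfies ‖(v(t), w(t))‖ < ε for all t ≥ 0. -/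
/-!
Along solutions, `V(v, w) = e^v - v - 1 + w² / (2(K₁ + K₂))` has derivative
`-e^{z₀} (e^v - 1)² ≤ 0`: the cross terms `∓ w (e^v - 1)` cancel. Since `V` is positive definite,
it has a positive minimum `m` on the sphere of radius `ε`; a solution starting where `V < m`
keeps `V < m`, so by the intermediate value theorem it never reaches that sphere.
-/

open Real Set Metric

section LyapunovStability

variable {E : Type*} [NormedAddCommGroup E] [ProperSpace E]

theorem exists_pos_le_on_sphere_of_pos {V : E → ℝ} (hV : Continuous V)
    (hpos : ∀ p ≠ 0, 0 < V p) {ε : ℝ} (hε : 0 < ε) :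
    ∃ m > 0, ∀ p ∈ sphere (0 : E) ε, m ≤ V p := by
  rcases (sphere (0 : E) ε).eq_empty_or_nonempty with hempty | hne
  · exact ⟨1, one_pos, by simp [hempty]⟩
  · obtain ⟨p₀, hp₀, hmin⟩ := (isCompact_sphere 0 ε).exists_isMinOn hne hV.continuousOn
    exact ⟨V p₀, hpos p₀ (ne_of_mem_sphere hp₀ hε.ne'), hmin⟩

theorem lyapunov_stable_of_antitoneOn {V : E → ℝ} (hV : Continuous V) (hV0 : V 0 = 0)
    (hpos : ∀ p ≠ 0, 0 < V p) {ε : ℝ} (hε : 0 < ε) :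
    ∃ δ > 0, ∀ x : ℝ → E, ContinuousOn x (Ici 0) → AntitoneOn (V ∘ x) (Ici 0) →
      ‖x 0‖ < δ → ∀ t ≥ 0, ‖x t‖ < ε := by
  obtain ⟨m, hm, hmV⟩ := exists_pos_le_on_sphere_of_pos hV hpos hε
  obtain ⟨δ, hδ, hVδ⟩ := Metric.continuousAt_iff.mp (hV.continuousAt (x := 0)) m hm
  refine ⟨min δ ε, lt_min hδ hε, fun x hx hVx hx0 t ht => ?_⟩
  have hV_start : V (x 0) < m := by
    have := hVδ (x := x 0) (by simpa using hx0.trans_le (min_le_left _ _))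
    rw [hV0, Real.dist_eq, sub_zero] at this
    exact (le_abs_self _).trans_lt this
  by_contra! hfar
  obtain ⟨s, hs, hxs⟩ : ∃ s ∈ Icc 0 t, ‖x s‖ = ε :=
    intermediate_value_Icc ht (hx.mono Icc_subset_Ici_self).norm
      ⟨(hx0.trans_le (min_le_right _ _)).le, hfar⟩
  have hV_sphere : m ≤ V (x s) := hmV _ (by simpa using hxs)
  have hV_decr : V (x s) ≤ V (x 0) := hVx self_mem_Ici hs.1 hs.1
  linarith

end LyapunovStability

theorem antitoneOn_Ici_of_hasDerivAt_nonpos {f f' : ℝ → ℝ} {a : ℝ}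
    (hf : ∀ t ≥ a, HasDerivAt f (f' t) t) (hf' : ∀ t ≥ a, f' t ≤ 0) : AntitoneOn f (Ici a) := by
  refine antitoneOn_of_hasDerivWithinAt_nonpos (convex_Ici a)
    (fun t ht => (hf t ht).continuousAt.continuousWithinAt) (fun t ht => ?_)
    (fun t ht => hf' t (interior_subset ht))
  exact (hf t (interior_subset ht)).hasDerivWithinAt

noncomputable def networkLyapunov (K : ℝ) (p : ℝ × ℝ) : ℝ :=
  exp p.1 - p.1 - 1 + p.2 ^ 2 / (2 * K)

theorem continuous_networkLyapunov (K : ℝ) : Continuous (networkLyapunov K) := by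
  unfold networkLyapunov
  fun_prop

theorem networkLyapunov_zero (K : ℝ) : networkLyapunov K 0 = 0 := by
  simp [networkLyapunov]

theorem networkLyapunov_pos {K : ℝ} (hK : 0 < K) {p : ℝ × ℝ} (hp : p ≠ 0) :
    0 < networkLyapunov K p := by
  obtain ⟨v, w⟩ := p
  have hw : 0 ≤ w ^ 2 / (2 * K) := by positivity
  unfold networkLyapunov
  by_cases hv : v = 0
  · subst hv
    have hw0 : w ≠ 0 := by rintro rfl; exact hp rfl
    have : 0 < w ^ 2 / (2 * K) := by positivity
    simpa using this
  · linarith [add_one_lt_exp hv]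

theorem hasDerivAt_networkLyapunov_comp {K c t : ℝ} {v w : ℝ → ℝ} (hK : K ≠ 0)
    (hv : HasDerivAt v (-c * (exp (v t) - 1) - w t) t)
    (hw : HasDerivAt w (K * (exp (v t) - 1)) t) :
    HasDerivAt (fun s => networkLyapunov K (v s, w s)) (-c * (exp (v t) - 1) ^ 2) t := by
  have h := ((hv.exp.sub hv).sub_const 1).add ((hw.pow 2).div_const (2 * K))
  refine h.congr_deriv ?_
  field_simp
  ring

theorem origin_lyapunov_stable_general (K₁ K₂ : ℝ) (hK₂ : |K₂| < K₁)
    (z₀ : ℝ) :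
    ∀ ε > (0 : ℝ), ∃ δ > (0 : ℝ), ∀ v w : ℝ → ℝ,
      (∀ t ≥ (0 : ℝ), HasDerivAt v (-Real.exp z₀ * (Real.exp (v t) - 1) - w t) t) →
      (∀ t ≥ (0 : ℝ), HasDerivAt w ((K₁ + K₂) * (Real.exp (v t) - 1)) t) →
      ‖(v 0, w 0)‖ < δ →
      ∀ t ≥ (0 : ℝ), ‖(v t, w t)‖ < ε := by
  intro ε hε
  have hK : 0 < K₁ + K₂ := by linarith [neg_abs_le K₂]
  obtain ⟨δ, hδ, hstable⟩ := lyapunov_stable_of_antitoneOn (continuous_networkLyapunov _)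
    (networkLyapunov_zero _) (fun _ hp => networkLyapunov_pos hK hp) hε
  refine ⟨δ, hδ, fun v w hv hw h0 => hstable (fun t => (v t, w t)) ?_ ?_ h0⟩
  · exact fun t ht => ((hv t ht).continuousAt.prodMk (hw t ht).continuousAt).continuousWithinAt
  · refine antitoneOn_Ici_of_hasDerivAt_nonpos
      (fun t ht => hasDerivAt_networkLyapunov_comp hK.ne' (hv t ht) (hw t ht)) fun t _ => ?_
    rw [neg_mul, neg_nonpos]
    positivity

/-- The origin is Lyapunov stable for the shifted network-level dynamics. -/
theorem origin_lyapunov_stable (K₁ K₂ : ℝ) (hK₁ : 0 < K₁) (hK₂ : |K₂| < K₁)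
    (z₀ : ℝ) (hz₀ : z₀ = Real.log (K₂ / K₁ + 1)) :
    ∀ ε > (0 : ℝ), ∃ δ > (0 : ℝ), ∀ v w : ℝ → ℝ,
      (∀ t ≥ (0 : ℝ), HasDerivAt v (-Real.exp z₀ * (Real.exp (v t) - 1) - w t) t) →
      (∀ t ≥ (0 : ℝ), HasDerivAt w ((K₁ + K₂) * (Real.exp (v t) - 1)) t) →
      ‖(v 0, w 0)‖ < δ →
      ∀ t ≥ (0 : ℝ), ‖(v t, w t)‖ < ε :=
  origin_lyapunov_stable_general K₁ K₂ hK₂ z₀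
end

section
/- Let K₁ > 0 and K₂ be real constants with |K₂| < K₁. For every pair of differentiable functions z, u : ℝ → ℝ satisfying ż(t) = 1 − e^{z(t)} − u(t) and u̇(t) = K₁(e^{z(t)} − 1) − K₂ for all t ≥ 0, one has z(t) → log(K₂/K₁ + 1) and u(t) → −K₂/K₁ as t → ∞. That is, the unique equilibrium (z₀, u₀) of the transformed network-level system is globally asymptotically attractive. -/
/-!
Shifting to `h = z - log E`, `w = u - (1 - E)` with `E = K₂ / K₁ + 1 > 0`, the energy
`K₁ (eᶻ - E - E h) + w² / 2` decreases along solutions, with derivative `-K₁ (eᶻ - E)²`. Its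
sublevel sets are bounded, so `z` stays in a compact interval `[L, U]`, on which `eᶻ - E` and the
Bregman term are comparable to `h` and `h²` (mean value and Taylor theorems for `exp`). There the
energy plus a small cross term `ε w h` is a strict Lyapunov function squeezed between two multiples
of `h² + w²`, so by Grönwall `h² + w²` decays exponentially.
-/

open Filter Real Set Topology

theorem exists_mem_uIcc_exp_sub_exp (a b : ℝ) :
    ∃ ξ ∈ uIcc b a, exp a - exp b = exp ξ * (a - b) := by
  rcases eq_or_ne b a with rfl | hba
  · exact ⟨b, left_mem_uIcc, by simp⟩
  obtain ⟨ξ, hξ, h⟩ := taylor_mean_remainder_lagrange_iteratedDeriv (f := exp) (n := 0) hba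
    contDiff_exp.contDiffOn
  refine ⟨ξ, uIoo_subset_uIcc_self hξ, ?_⟩
  simpa using h

theorem exists_mem_uIcc_exp_sub_exp_sub_mul (a b : ℝ) :
    ∃ ξ ∈ uIcc b a, exp a - exp b - exp b * (a - b) = exp ξ / 2 * (a - b) ^ 2 := by
  rcases eq_or_ne b a with rfl | hba
  · exact ⟨b, left_mem_uIcc, by simp⟩
  obtain ⟨ξ, hξ, h⟩ := taylor_mean_remainder_lagrange_iteratedDeriv (f := exp) (n := 1) hba
    contDiff_exp.contDiffOn
  have hderiv : derivWithin exp (uIcc b a) b = exp b :=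
    (hasDerivAt_exp b).hasDerivWithinAt.derivWithin ((uniqueDiffOn_uIcc hba) b left_mem_uIcc)
  refine ⟨ξ, uIoo_subset_uIcc_self hξ, ?_⟩
  simp only [taylorWithinEval_succ, taylor_within_zero_eval, zero_add, iteratedDerivWithin_one,
    hderiv, iteratedDeriv_succ, iteratedDeriv_zero, Real.deriv_exp] at h
  norm_num at h
  linear_combination h

theorem le_mul_exp_of_hasDerivAt_le {f f' : ℝ → ℝ} {k : ℝ} (hf : ∀ t ≥ 0, HasDerivAt f (f' t) t)
    (hf' : ∀ t ≥ 0, f' t ≤ k * f t) {t : ℝ} (ht : 0 ≤ t) : f t ≤ f 0 * exp (k * t) := by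
  have := le_gronwallBound_of_liminf_deriv_right_le (ε := 0)
    (fun x hx ↦ (hf x hx.1).continuousAt.continuousWithinAt)
    (fun x hx _ hr ↦ (hf x hx.1).hasDerivWithinAt.liminf_right_slope_le hr) le_rfl
    (fun x hx ↦ by simpa using hf' x hx.1) t ⟨ht, le_rfl⟩
  simpa [gronwallBound_ε0] using this

theorem tendsto_zero_of_strict_lyapunov {V V' q : ℝ → ℝ} {m M δ : ℝ} (hm : 0 < m) (hM : 0 < M)
    (hδ : 0 < δ) (hV : ∀ t ≥ 0, HasDerivAt V (V' t) t) (hq : ∀ t ≥ 0, 0 ≤ q t)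
    (hlow : ∀ t ≥ 0, m * q t ≤ V t) (hup : ∀ t ≥ 0, V t ≤ M * q t)
    (hV' : ∀ t ≥ 0, V' t ≤ -δ * q t) : Tendsto q atTop (𝓝 0) := by
  have hdecay : ∀ t ≥ 0, V t ≤ V 0 * exp (-(δ / M) * t) := fun t ↦
    le_mul_exp_of_hasDerivAt_le hV fun s hs ↦ by
      have : δ / M * V s ≤ δ * q s := by
        rw [div_mul_eq_mul_div, div_le_iff₀ hM]; nlinarith [hup s hs]
      linarith [hV' s hs]
  have hexp : Tendsto (fun t ↦ V 0 / m * exp (-(δ / M) * t)) atTop (𝓝 0) := by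
    have hrate : -(δ / M) < 0 := neg_neg_of_pos (div_pos hδ hM)
    simpa using
      (tendsto_exp_atBot.comp (tendsto_id.const_mul_atTop_of_neg hrate)).const_mul (V 0 / m)
  refine squeeze_zero' (eventually_ge_atTop 0 |>.mono hq) ?_ hexp
  filter_upwards [eventually_ge_atTop 0] with t ht
  rw [div_mul_eq_mul_div, le_div_iff₀ hm, mul_comm]
  exact (hlow t ht).trans (hdecay t ht)

theorem tendsto_of_sq_sub_add_le {α : Type*} {l : Filter α} {f q : α → ℝ} {a : ℝ}
    (hq : Tendsto q l (𝓝 0)) (hf : ∀ t, (f t - a) ^ 2 ≤ q t) : Tendsto f l (𝓝 a) := by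
  rw [tendsto_iff_norm_sub_tendsto_zero]
  refine squeeze_zero (fun _ ↦ norm_nonneg _) (fun t ↦ ?_) (by simpa using hq.sqrt)
  rw [Real.norm_eq_abs, ← Real.sqrt_sq_eq_abs]
  exact Real.sqrt_le_sqrt (hf t)

theorem tendsto_nhds_of_sq_add_sq {α : Type*} {l : Filter α} {f g : α → ℝ} {a b : ℝ}
    (h : Tendsto (fun t ↦ (f t - a) ^ 2 + (g t - b) ^ 2) l (𝓝 0)) :
    Tendsto f l (𝓝 a) ∧ Tendsto g l (𝓝 b) :=
  ⟨tendsto_of_sq_sub_add_le h fun _ ↦ le_add_of_nonneg_right (sq_nonneg _),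
    tendsto_of_sq_sub_add_le h fun _ ↦ le_add_of_nonneg_left (sq_nonneg _)⟩

theorem exists_Icc_of_exp_sub_mul_le {E : ℝ} (hE : 0 < E) (C : ℝ) :
    ∃ L U, ∀ a, exp a - E * a ≤ C → a ∈ Icc L U := by
  refine ⟨-|C| / E, 2 * E + 2 * |C| + 2, fun a ha ↦ ⟨?_, ?_⟩⟩
  · rw [div_le_iff₀ hE]
    nlinarith [exp_pos a, le_abs_self C]
  · by_contra! h
    have ha₀ : 0 ≤ a := by linarith [abs_nonneg C]
    nlinarith [quadratic_le_exp_of_nonneg ha₀, abs_nonneg C, le_abs_self C]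

namespace TransformedSystem

/-- Evaluated at `a = z t`, `b = u t`. The equilibrium is `(log E, 1 - E)`; for `ε = 0` this is the
energy, whose derivative vanishes on the whole line `z = log E`, and the cross term makes the
derivative negative definite. -/
noncomputable def lyapunov (K E ε a b : ℝ) : ℝ :=
  K * (exp a - E - E * (a - log E)) + (b - (1 - E)) ^ 2 / 2 + ε * ((b - (1 - E)) * (a - log E))

noncomputable def lyapunovDeriv (K E ε a b : ℝ) : ℝ :=
  -(K * (exp a - E) ^ 2) +
    ε * (K * (exp a - E) * (a - log E) + (b - (1 - E)) * (-(exp a - E) - (b - (1 - E))))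

variable {K E ε L U a b : ℝ}

theorem lyapunov_zero_nonneg (hK : 0 ≤ K) (hE : 0 < E) (a b : ℝ) : 0 ≤ lyapunov K E 0 a b := by
  obtain ⟨ξ, -, hξ⟩ := exists_mem_uIcc_exp_sub_exp_sub_mul a (log E)
  rw [exp_log hE] at hξ
  rw [lyapunov, hξ, zero_mul, add_zero]
  positivity

theorem lyapunov_ge (hK : 0 ≤ K) (hE : 0 < E) (hε : 0 ≤ ε) (hεL : 2 * ε ≤ K * exp L)
    (hε1 : 2 * ε ≤ 1) (ha : a ∈ Icc L U) (hlog : log E ∈ Icc L U) :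
    ε / 2 * ((a - log E) ^ 2 + (b - (1 - E)) ^ 2) ≤ lyapunov K E ε a b := by
  obtain ⟨ξ, hξ, hbreg⟩ := exists_mem_uIcc_exp_sub_exp_sub_mul a (log E)
  rw [exp_log hE] at hbreg
  have hLξ : K * exp L ≤ K * exp ξ := by gcongr; exact (uIcc_subset_Icc hlog ha hξ).1
  rw [lyapunov, hbreg]
  nlinarith [sq_nonneg (a - log E), sq_nonneg (b - (1 - E) + (a - log E))]

theorem lyapunov_le (hK : 0 ≤ K) (hE : 0 < E) (hε : 0 ≤ ε) (ha : a ∈ Icc L U)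
    (hlog : log E ∈ Icc L U) :
    lyapunov K E ε a b ≤ (K * exp U + 1 + ε) / 2 * ((a - log E) ^ 2 + (b - (1 - E)) ^ 2) := by
  obtain ⟨ξ, hξ, hbreg⟩ := exists_mem_uIcc_exp_sub_exp_sub_mul a (log E)
  rw [exp_log hE] at hbreg
  have hξU : K * exp ξ ≤ K * exp U := by gcongr; exact (uIcc_subset_Icc hlog ha hξ).2
  rw [lyapunov, hbreg]
  nlinarith [sq_nonneg (a - log E), sq_nonneg (b - (1 - E) - (a - log E)),
    mul_nonneg hK (exp_pos U).le, sq_nonneg (b - (1 - E))]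

theorem lyapunovDeriv_le (hK : 0 ≤ K) (hE : 0 < E) (hε : 0 ≤ ε) (hεK : ε ≤ K)
    (hεL : 4 * ε ≤ exp L) (ha : a ∈ Icc L U) (hlog : log E ∈ Icc L U) :
    lyapunovDeriv K E ε a b ≤
      -min (K * exp L ^ 2 / 4) (ε / 2) * ((a - log E) ^ 2 + (b - (1 - E)) ^ 2) := by
  obtain ⟨ξ, hξ, hmvt⟩ := exists_mem_uIcc_exp_sub_exp a (log E)
  rw [exp_log hE] at hmvt
  have hLξ : exp L ≤ exp ξ := exp_le_exp.2 (uIcc_subset_Icc hlog ha hξ).1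
  set s := exp ξ
  set h := a - log E
  set w := b - (1 - E)
  -- `ε s h w ≤ ε (s² h² + w²) / 2`, and `4 ε ≤ s`, `ε ≤ K` absorb `ε K s h²` and `ε s² h² / 2`.
  have key : lyapunovDeriv K E ε a b ≤ -(K * s ^ 2 / 4 * h ^ 2 + ε / 2 * w ^ 2) := by
    rw [lyapunovDeriv, hmvt]
    nlinarith [sq_nonneg (s * h + w), mul_nonneg hε (sq_nonneg (s * h + w)),
      mul_nonneg (mul_nonneg hK (exp_pos ξ).le) (sq_nonneg h)]
  have hmin₁ := min_le_left (K * exp L ^ 2 / 4) (ε / 2)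
  have hmin₂ := min_le_right (K * exp L ^ 2 / 4) (ε / 2)
  have hsq : K * exp L ^ 2 / 4 ≤ K * s ^ 2 / 4 := by gcongr
  nlinarith [sq_nonneg h, sq_nonneg w]

section Solution

variable {z u : ℝ → ℝ} (hz : ∀ t ≥ 0, HasDerivAt z (1 - exp (z t) - u t) t)
  (hu : ∀ t ≥ 0, HasDerivAt u (K * (exp (z t) - E)) t)
include hz hu

theorem hasDerivAt_lyapunov {t : ℝ} (ht : 0 ≤ t) :
    HasDerivAt (fun t ↦ lyapunov K E ε (z t) (u t)) (lyapunovDeriv K E ε (z t) (u t)) t := by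
  have hz' := hz t ht
  have hu' := hu t ht
  have := (((hz'.exp.sub_const E).sub ((hz'.sub_const (log E)).const_mul E)).const_mul K).add
    (((hu'.sub_const (1 - E)).pow 2).div_const 2) |>.add
    (((hu'.sub_const (1 - E)).mul (hz'.sub_const (log E))).const_mul ε)
  exact this.congr_deriv (by simp only [lyapunovDeriv]; push_cast; ring)

theorem lyapunov_zero_le (hK : 0 ≤ K) {t : ℝ} (ht : 0 ≤ t) :
    lyapunov K E 0 (z t) (u t) ≤ lyapunov K E 0 (z 0) (u 0) := by
  have hdissip : ∀ s ≥ 0, lyapunovDeriv K E 0 (z s) (u s) ≤ 0 * lyapunov K E 0 (z s) (u s) :=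
    fun s _ ↦ by simp only [lyapunovDeriv, zero_mul, add_zero, neg_nonpos]; positivity
  simpa using le_mul_exp_of_hasDerivAt_le (fun s hs ↦ hasDerivAt_lyapunov hz hu hs) hdissip ht

theorem exists_Icc_forall_mem (hK : 0 < K) (hE : 0 < E) :
    ∃ L U, log E ∈ Icc L U ∧ ∀ t ≥ 0, z t ∈ Icc L U := by
  set V₀ := lyapunov K E 0 (z 0) (u 0)
  obtain ⟨L, U, hLU⟩ := exists_Icc_of_exp_sub_mul_le hE (V₀ / K + E - E * log E)
  refine ⟨L, U, hLU _ ?_, fun t ht ↦ hLU _ ?_⟩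
  · rw [exp_log hE]
    linarith [div_nonneg (lyapunov_zero_nonneg hK.le hE (z 0) (u 0)) hK.le]
  · have hV := lyapunov_zero_le hz hu hK.le ht
    have hbreg : K * (exp (z t) - E - E * (z t - log E)) ≤ V₀ := by
      rw [lyapunov, zero_mul, add_zero] at hV
      nlinarith [sq_nonneg (u t - (1 - E))]
    linarith [(le_div_iff₀' hK).2 hbreg]

theorem tendsto_equilibrium (hK : 0 < K) (hE : 0 < E) :
    Tendsto z atTop (𝓝 (log E)) ∧ Tendsto u atTop (𝓝 (1 - E)) := by
  obtain ⟨L, U, hlog, hzLU⟩ := exists_Icc_forall_mem hz hu hK hE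
  obtain ⟨k, hk, hkK, hk1⟩ : ∃ k, 0 < k ∧ k ≤ K ∧ k ≤ 1 :=
    ⟨min K 1, lt_min hK one_pos, min_le_left _ _, min_le_right _ _⟩
  obtain ⟨ℓ, hℓ, hℓL, hℓ1⟩ : ∃ ℓ, 0 < ℓ ∧ ℓ ≤ exp L ∧ ℓ ≤ 1 :=
    ⟨min (exp L) 1, lt_min (exp_pos L) one_pos, min_le_left _ _, min_le_right _ _⟩
  have hε : 0 < k * ℓ / 4 := by positivity
  have hεK : k * ℓ / 4 ≤ K := by nlinarith
  have hεL : 4 * (k * ℓ / 4) ≤ exp L := by nlinarith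
  have hεL' : 2 * (k * ℓ / 4) ≤ K * exp L := by nlinarith
  have hε1 : 2 * (k * ℓ / 4) ≤ 1 := by nlinarith
  refine tendsto_nhds_of_sq_add_sq <| tendsto_zero_of_strict_lyapunov (half_pos hε) (by positivity)
    (lt_min (by positivity) (half_pos hε))
    (fun t ht ↦ hasDerivAt_lyapunov hz hu ht) (fun t _ ↦ by positivity)
    (fun t ht ↦ lyapunov_ge hK.le hE hε.le hεL' hε1 (hzLU t ht) hlog)
    (fun t ht ↦ lyapunov_le hK.le hE hε.le (hzLU t ht) hlog)
    (fun t ht ↦ lyapunovDeriv_le hK.le hE hε.le hεK hεL (hzLU t ht) hlog)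

end Solution

end TransformedSystem

/-- Every solution of the transformed network-level system
`ż = 1 - e^z - u`, `u̇ = K₁(e^z - 1) - K₂` converges to the unique
equilibrium `(log (K₂/K₁ + 1), -K₂/K₁)`. -/
theorem transformed_system_attractive (K₁ K₂ : ℝ) (hK₁ : 0 < K₁)
    (hK₂ : |K₂| < K₁) :
    ∀ z u : ℝ → ℝ,
      (∀ t ≥ (0 : ℝ), HasDerivAt z (1 - Real.exp (z t) - u t) t) →
      (∀ t ≥ (0 : ℝ), HasDerivAt u (K₁ * (Real.exp (z t) - 1) - K₂) t) →
      Tendsto z atTop (nhds (Real.log (K₂ / K₁ + 1))) ∧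
        Tendsto u atTop (nhds (-(K₂ / K₁))) := by
  intro z u hz hu
  have hE : 0 < K₂ / K₁ + 1 := by
    have : -1 < K₂ / K₁ := by rw [lt_div_iff₀ hK₁]; linarith [neg_abs_le K₂]
    linarith
  have hu' : ∀ t ≥ 0, HasDerivAt u (K₁ * (exp (z t) - (K₂ / K₁ + 1))) t := fun t ht ↦
    (hu t ht).congr_deriv (by field_simp; ring)
  obtain ⟨hz_lim, hu_lim⟩ := TransformedSystem.tendsto_equilibrium hz hu' hK₁ hE
  exact ⟨hz_lim, by convert hu_lim using 2; ring⟩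
end
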